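/- arXiv:1312.4913 — 5 statements merged into one kernel-verified Lean document; each statement's English description precedes it below -/
import Mathlib

section
/- For every integer m ≥ 1 there is a constant C_m such that for every smooth function ω compactly supported in (0,1), the velocity u defined by u(x) = -x ∫_x^1 ω(y)/y dy satisfies sup_{x∈[0,1]} |u^{(m+1)}(x)| ≤ C_m · sup_{x∈[0,1]} |ω^{(m)}(x)|, where f^{(k)} denotes the k-th derivative. -/
open MeasureTheory Set

/-- `sup_{x ∈ [0,1]} |f x|`. -/
noncomputable def supAbs (f : ℝ → ℝ) : ℝ := sSup ((fun x => |f x|) '' Icc (0:ℝ) 1)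

private lemma hasDerivAt_iter {f : ℝ → ℝ} (hf : ∀ k, Differentiable ℝ (iteratedDeriv k f))
    (k : ℕ) (x : ℝ) :
    HasDerivAt (iteratedDeriv k f) (iteratedDeriv (k + 1) f x) x := by
  rw [iteratedDeriv_succ]
  exact ((hf k) x).hasDerivAt

private lemma iteratedDeriv_add' {f g : ℝ → ℝ}
    (hf : ∀ k, Differentiable ℝ (iteratedDeriv k f))
    (hg : ∀ k, Differentiable ℝ (iteratedDeriv k g)) (n : ℕ) :
    iteratedDeriv n (fun x => f x + g x)
      = fun x => iteratedDeriv n f x + iteratedDeriv n g x := by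
  induction n with
  | zero => simp
  | succ n ih =>
    funext x
    rw [iteratedDeriv_succ, ih]
    exact ((hasDerivAt_iter hf n x).add (hasDerivAt_iter hg n x)).deriv

/-- For every `m ≥ 1` there is `C_m` such that for every smooth `ω` compactly
supported in `(0,1)`, the velocity `u(x) = -x ∫_x^1 ω(y)/y dy` satisfies
`‖u^{(m+1)}‖_{L^∞[0,1]} ≤ C_m ‖ω^{(m)}‖_{L^∞[0,1]}`. -/
theorem velocity_Cm_bound (m : ℕ) (hm : 1 ≤ m) :
    ∃ C : ℝ, 0 < C ∧
      ∀ ω : ℝ → ℝ, ContDiff ℝ (⊤ : ℕ∞) ω → HasCompactSupport ω →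
        tsupport ω ⊆ Ioo (0:ℝ) 1 →
        supAbs (iteratedDeriv (m+1) (fun x => -x * ∫ y in x..1, ω y / y))
          ≤ C * supAbs (iteratedDeriv m ω) := by
  obtain ⟨n, rfl⟩ : ∃ n, m = n + 1 := ⟨m - 1, (Nat.succ_pred_eq_of_pos hm).symm⟩
  refine ⟨2, two_pos, ?_⟩
  intro ω hω hωc hωs
  set S := supAbs (iteratedDeriv (n+1) ω) with hSdef
  have hωcont : Continuous (iteratedDeriv (n+1) ω) := hω.continuous_iteratedDeriv _ (by exact_mod_cast le_top)
  have hbdd : BddAbove ((fun x => |iteratedDeriv (n+1) ω x|) '' Icc (0:ℝ) 1) :=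
    (isCompact_Icc.image hωcont.abs).bddAbove
  have hS0 : 0 ≤ S := Real.sSup_nonneg (by rintro y ⟨x, -, rfl⟩; positivity)
  have hSle : ∀ t ∈ Icc (0:ℝ) 1, |iteratedDeriv (n+1) ω t| ≤ S :=
    fun t ht => le_csSup hbdd ⟨t, ht, rfl⟩
  -- ω vanishes near 0
  have h0mem : (tsupport ω)ᶜ ∈ nhds (0:ℝ) := by
    refine (isClosed_tsupport ω).isOpen_compl.mem_nhds fun hc => ?_
    simpa using (hωs hc).1
  have hω0 : ∀ᶠ y in nhds (0:ℝ), ω y = 0 :=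
    Filter.eventually_of_mem h0mem fun y hy => image_eq_zero_of_notMem_tsupport hy
  set h : ℝ → ℝ := fun y => ω y / y with hhdef
  have hh0 : ∀ᶠ y in nhds (0:ℝ), h y = 0 := hω0.mono fun y hy => by simp [hhdef, hy]
  have hω00 : ω 0 = 0 := hω0.self_of_nhds
  have hhsm : ContDiff ℝ (⊤ : ℕ∞) h := by
    rw [contDiff_iff_contDiffAt]
    intro x
    rcases eq_or_ne x 0 with rfl | hx
    · exact contDiffAt_const.congr_of_eventuallyEq hh0
    · exact hω.contDiffAt.div contDiffAt_id hx
  have hdiffh : ∀ k, Differentiable ℝ (iteratedDeriv k h) := fun k =>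
    hhsm.differentiable_iteratedDeriv k (by exact_mod_cast WithTop.coe_lt_top _)
  have hdiffω : ∀ k, Differentiable ℝ (iteratedDeriv k ω) := fun k =>
    hω.differentiable_iteratedDeriv k (by exact_mod_cast WithTop.coe_lt_top _)
  have hdiffω' : ∀ k, Differentiable ℝ (iteratedDeriv k (deriv ω)) := fun k => by
    rw [← iteratedDeriv_succ']
    exact hdiffω (k+1)
  have hxh : ∀ x : ℝ, x * h x = ω x := by
    intro x
    rcases eq_or_ne x 0 with rfl | hx
    · simp [hhdef, hω00]
    · show x * (ω x / x) = ω x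
      field_simp
  have hhc : Continuous h := hhsm.continuous
  set G : ℝ → ℝ := fun x => ∫ t in (1:ℝ)..x, h t with hGdef
  have hG : ∀ x, HasDerivAt G (h x) x := fun x =>
    intervalIntegral.integral_hasDerivAt_right (hhc.intervalIntegrable _ _)
      (hhc.stronglyMeasurableAtFilter _ _) hhc.continuousAt
  have hu : (fun x : ℝ => -x * ∫ y in x..1, ω y / y) = fun x => x * G x := by
    funext x
    rw [intervalIntegral.integral_symm]
    simp only [hGdef, hhdef]
    ring
  have hu' : deriv (fun x => x * G x) = fun x => G x + ω x := by
    funext x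
    rw [show deriv (fun x => x * G x) x = _ from ((hasDerivAt_id' (x := x)).mul (hG x)).deriv, hxh]
    ring
  have hu'' : deriv (fun x => G x + ω x) = fun x => h x + deriv ω x := by
    funext x
    exact ((hG x).add ((hω.differentiable (by simp) x).hasDerivAt)).deriv
  -- the key Leibniz identity
  have key : ∀ k : ℕ, iteratedDeriv (k+1) ω
      = fun x => x * iteratedDeriv (k+1) h x + ((k:ℝ)+1) * iteratedDeriv k h x := by
    intro k
    induction k with
    | zero =>
      funext x
      have hωeq : ω = fun x => x * h x := funext fun x => (hxh x).symm
      have hd : HasDerivAt h (deriv h x) x := (hhsm.differentiable (by simp) x).hasDerivAt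
      rw [iteratedDeriv_one, hωeq, show deriv (fun x => x * h x) x = _ from ((hasDerivAt_id' (x := x)).mul hd).deriv]
      simp only [zero_add, iteratedDeriv_one, iteratedDeriv_zero]
      push_cast
      ring
    | succ k ih =>
      funext x
      rw [iteratedDeriv_succ, ih,
        show deriv (fun x => x * iteratedDeriv (k + 1) h x + ((k:ℝ) + 1) * iteratedDeriv k h x) x = _ from (((hasDerivAt_id' (x := x)).mul (hasDerivAt_iter hdiffh (k+1) x)).add
          ((hasDerivAt_iter hdiffh k x).const_mul _)).deriv]
      push_cast
      ring
  -- FTC for φ = x^(n+1) * H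
  have hφ : ∀ x : ℝ, HasDerivAt (fun y => y^(n+1) * iteratedDeriv n h y)
      (x^n * iteratedDeriv (n+1) ω x) x := by
    intro x
    have h1 := (hasDerivAt_pow (n+1) x).mul (hasDerivAt_iter hdiffh n x)
    have h2 : x^n * iteratedDeriv (n+1) ω x
        = (↑(n+1) * x ^ (n+1-1)) * iteratedDeriv n h x + x^(n+1) * iteratedDeriv (n+1) h x := by
      simp only [key n, Nat.add_sub_cancel]
      push_cast
      ring
    rw [h2]
    exact h1
  have hintc : Continuous (fun t : ℝ => t^n * iteratedDeriv (n+1) ω t) :=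
    (continuous_pow n).mul hωcont
  have hint : ∀ x ∈ Icc (0:ℝ) 1,
      x^(n+1) * iteratedDeriv n h x = ∫ t in (0:ℝ)..x, t^n * iteratedDeriv (n+1) ω t := by
    intro x hx
    rw [intervalIntegral.integral_eq_sub_of_hasDerivAt (fun t _ => hφ t)
      (hintc.intervalIntegrable 0 x)]
    simp
  have habs : ∀ x ∈ Icc (0:ℝ) 1, |x^(n+1) * iteratedDeriv n h x| ≤ S * x^(n+1) := by
    intro x hx
    rw [hint x hx]
    have step1 : |∫ t in (0:ℝ)..x, t^n * iteratedDeriv (n+1) ω t|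
        ≤ ∫ t in (0:ℝ)..x, |t^n * iteratedDeriv (n+1) ω t| :=
      intervalIntegral.abs_integral_le_integral_abs hx.1
    have step2 : (∫ t in (0:ℝ)..x, |t^n * iteratedDeriv (n+1) ω t|)
        ≤ ∫ t in (0:ℝ)..x, t^n * S := by
      apply intervalIntegral.integral_mono_on hx.1
        (hintc.abs.intervalIntegrable 0 x)
        (((continuous_pow n).mul continuous_const).intervalIntegrable 0 x)
      intro t ht
      rw [abs_mul, abs_pow, abs_of_nonneg ht.1]
      exact mul_le_mul_of_nonneg_left
        (hSle t ⟨ht.1, ht.2.trans hx.2⟩) (pow_nonneg ht.1 n)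
    have step3 : (∫ t in (0:ℝ)..x, t^n * S) = S * (x^(n+1) / (n+1)) := by
      rw [intervalIntegral.integral_mul_const, integral_pow]
      ring
    have step4 : S * (x^(n+1) / (n+1)) ≤ S * x^(n+1) := by
      apply mul_le_mul_of_nonneg_left _ hS0
      apply div_le_self (pow_nonneg hx.1 _)
      exact_mod_cast Nat.one_le_iff_ne_zero.mpr (Nat.succ_ne_zero n)
    calc |∫ t in (0:ℝ)..x, t^n * iteratedDeriv (n+1) ω t|
        ≤ ∫ t in (0:ℝ)..x, |t^n * iteratedDeriv (n+1) ω t| := step1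
      _ ≤ ∫ t in (0:ℝ)..x, t^n * S := step2
      _ = S * (x^(n+1) / (n+1)) := step3
      _ ≤ S * x^(n+1) := step4
  -- iterated derivatives of h vanish near 0
  have hvan : ∀ k : ℕ, ∀ᶠ y in nhds (0:ℝ), iteratedDeriv k h y = 0 := by
    intro k
    induction k with
    | zero => simpa using hh0
    | succ k ih =>
      have heq : iteratedDeriv k h =ᶠ[nhds (0:ℝ)] (fun _ => (0:ℝ)) := ih
      refine heq.deriv.mono fun y hy => ?_
      rw [iteratedDeriv_succ, hy, deriv_const]
  have hH : ∀ x ∈ Icc (0:ℝ) 1, |iteratedDeriv n h x| ≤ S := by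
    intro x hx
    rcases eq_or_lt_of_le hx.1 with rfl | hx0
    · rw [(hvan n).self_of_nhds]
      simpa using hS0
    · have h1 := habs x hx
      have hp : (0:ℝ) < x^(n+1) := pow_pos hx0 _
      rw [abs_mul, abs_of_nonneg hp.le, mul_comm S] at h1
      exact le_of_mul_le_mul_left h1 hp
  -- assemble : iteratedDeriv (n+2) u = H + ω^(n+1)
  have e1 : iteratedDeriv (n+1+1) (fun x : ℝ => -x * ∫ y in x..1, ω y / y)
      = fun x => iteratedDeriv n h x + iteratedDeriv (n+1) ω x := by
    rw [hu, iteratedDeriv_succ', hu', iteratedDeriv_succ', hu'',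
      iteratedDeriv_add' hdiffh hdiffω']
    funext x
    rw [← iteratedDeriv_succ']
  rw [supAbs, e1]
  apply Real.sSup_le
  · rintro y ⟨x, hx, rfl⟩
    simp only
    calc |iteratedDeriv n h x + iteratedDeriv (n+1) ω x|
        ≤ |iteratedDeriv n h x| + |iteratedDeriv (n+1) ω x| := abs_add_le _ _
      _ ≤ S + S := add_le_add (hH x hx) (hSle x hx)
      _ = 2 * S := by ring
  · linarith
end

section
/- Let (ω,ρ) be a classical solution of the 1D model Boussinesq system on [0,T], let x ∈ (0,1), and let φ_t(x) be the characteristic through x. Set M(t) := ∫₀^t sup_{y∈[0,1]} |ω(s,y)| ds. Then for every t ∈ [0,T], the characteristic satisfies x^{exp(M(t))} ≤ φ_t(x) ≤ x^{exp(-M(t))}. -/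
open MeasureTheory Set

/-- `Ω(t,x) = ∫_x^1 ω(t,y)/y dy`. -/
noncomputable def OmegaF (ω : ℝ → ℝ → ℝ) (t x : ℝ) : ℝ := ∫ y in x..1, ω t y / y

/-- The velocity `u(t,x) = -x Ω(t,x)`. -/
noncomputable def uF (ω : ℝ → ℝ → ℝ) (t x : ℝ) : ℝ := -x * OmegaF ω t x

/-- A classical solution of the 1D model Boussinesq system on a time interval `I`:
the pair `(ω,ρ)` is continuously differentiable in `(t,x)` on `I × [0,1]` and the
equations `∂_t ρ + u ∂_x ρ = 0`, `∂_t ω + u ∂_x ω = ∂_x ρ` hold pointwise. -/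
def IsClassicalSolution (ω ρ : ℝ → ℝ → ℝ) (I : Set ℝ) : Prop :=
  ContDiffOn ℝ 1 (fun p : ℝ × ℝ => ω p.1 p.2) (I ×ˢ Icc (0:ℝ) 1) ∧
  ContDiffOn ℝ 1 (fun p : ℝ × ℝ => ρ p.1 p.2) (I ×ˢ Icc (0:ℝ) 1) ∧
  ∀ t ∈ I, ∀ x ∈ Icc (0:ℝ) 1,
    (deriv (fun s => ρ s x) t + uF ω t x * deriv (fun y => ρ t y) x = 0) ∧
    (deriv (fun s => ω s x) t + uF ω t x * deriv (fun y => ω t y) x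
        = deriv (fun y => ρ t y) x)

/-!
In the coordinate `G = log (-log φ)` the characteristic equation `φ' = -φ Ω(t, φ)` becomes
`G' = Ω(t, φ) / (-log φ)`. Since `∫_z^1 dy / y = -log z`, one has `|Ω(t, z)| ≤ ‖ω(t)‖_∞ (-log z)`,
so `|G'| ≤ ‖ω(t)‖_∞` and `|G(t) - G(0)| ≤ M(t)`; exponentiating twice gives the two bounds. A
continuous induction in `t` keeps `φ` inside `(0, 1)`, where `G` is defined.
-/

open Real Topology

theorem abs_le_supAbs {f : ℝ → ℝ} (hf : ContinuousOn f (Icc 0 1)) {y : ℝ} (hy : y ∈ Icc 0 1) :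
    |f y| ≤ supAbs f :=
  le_csSup (isCompact_Icc.image_of_continuousOn hf.abs).bddAbove (mem_image_of_mem _ hy)

theorem continuousOn_supAbs {ω : ℝ → ℝ → ℝ} {I : Set ℝ}
    (hω : ContinuousOn (fun p : ℝ × ℝ => ω p.1 p.2) (I ×ˢ Icc 0 1)) :
    ContinuousOn (fun t => supAbs (ω t)) I := by
  rw [continuousOn_iff_continuous_domRestrict]
  -- extend `ω t` from `[0, 1]` to `ℝ` by `projIcc` so that the compact-sup lemma applies
  let f : I → ℝ → ℝ := fun t y => |ω t (projIcc 0 1 zero_le_one y)|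
  have hf : Continuous ↿f :=
    (hω.comp_continuous (continuous_subtype_val.fst'.prodMk
      (continuous_subtype_val.comp ((continuous_projIcc (h := zero_le_one)).comp continuous_snd)))
      fun p => ⟨p.1.2, (projIcc 0 1 zero_le_one p.2).2⟩).abs
  convert (isCompact_Icc (a := (0 : ℝ)) (b := 1)).continuous_sSup hf with t
  exact congrArg sSup (image_congr fun y hy => by simp [f, projIcc_of_mem zero_le_one hy])

theorem abs_OmegaF_le {ω : ℝ → ℝ → ℝ} {t z m : ℝ} (hz : z ∈ Ioo 0 1)
    (hω : ∀ y ∈ Ioc z 1, |ω t y| ≤ m) : |OmegaF ω t z| ≤ m * -log z := by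
  have hbound : ∀ y ∈ Ioc z 1, ‖ω t y / y‖ ≤ m * y⁻¹ := fun y hy => by
    have hy0 : 0 < y := hz.1.trans hy.1
    rw [Real.norm_eq_abs, abs_div, abs_of_pos hy0, div_eq_mul_inv]
    exact mul_le_mul_of_nonneg_right (hω y hy) (inv_nonneg.2 hy0.le)
  have hinv : IntervalIntegrable (fun y => m * y⁻¹) volume z 1 :=
    (intervalIntegral.intervalIntegrable_inv (fun y hy => by
      rw [uIcc_of_le hz.2.le] at hy; exact (hz.1.trans_le hy.1).ne')
      continuousOn_id).const_mul m
  calc |OmegaF ω t z| ≤ ∫ y in z..1, m * y⁻¹ :=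
        intervalIntegral.norm_integral_le_of_norm_le hz.2.le
          (ae_of_all _ hbound) hinv
    _ = m * -log z := by
        rw [intervalIntegral.integral_const_mul, integral_inv_of_pos hz.1 one_pos, one_div,
          log_inv]

theorem rpow_exp_eq_exp_neg_exp {x : ℝ} (hx : x ∈ Ioo 0 1) (A : ℝ) :
    x ^ exp A = exp (-exp (log (-log x) + A)) := by
  rw [exp_add, exp_log (neg_pos.2 (log_neg hx.1 hx.2)), rpow_def_of_pos hx.1]
  ring_nf

theorem eq_exp_neg_exp_log_neg_log {y : ℝ} (hy : y ∈ Ioo 0 1) :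
    y = exp (-exp (log (-log y))) := by
  simpa using rpow_exp_eq_exp_neg_exp hy 0

theorem rpow_exp_le_iff {x y A : ℝ} (hx : x ∈ Ioo 0 1) (hy : y ∈ Ioo 0 1) :
    x ^ exp A ≤ y ↔ log (-log y) ≤ log (-log x) + A := by
  rw [rpow_exp_eq_exp_neg_exp hx, eq_exp_neg_exp_log_neg_log hy, exp_le_exp, neg_le_neg_iff,
    exp_le_exp, ← eq_exp_neg_exp_log_neg_log hy]

theorem le_rpow_exp_iff {x y A : ℝ} (hx : x ∈ Ioo 0 1) (hy : y ∈ Ioo 0 1) :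
    y ≤ x ^ exp A ↔ log (-log x) + A ≤ log (-log y) := by
  rw [rpow_exp_eq_exp_neg_exp hx, eq_exp_neg_exp_log_neg_log hy, exp_le_exp, neg_le_neg_iff,
    exp_le_exp, ← eq_exp_neg_exp_log_neg_log hy]

theorem mem_Icc_rpow_exp_iff {x y M : ℝ} (hx : x ∈ Ioo 0 1) :
    y ∈ Icc (x ^ exp M) (x ^ exp (-M)) ↔
      y ∈ Ioo 0 1 ∧ |log (-log y) - log (-log x)| ≤ M := by
  constructor
  · rintro ⟨hlo, hhi⟩
    have hy : y ∈ Ioo 0 1 :=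
      ⟨(rpow_pos_of_pos hx.1 _).trans_le hlo, hhi.trans_lt (rpow_lt_one hx.1.le hx.2 (exp_pos _))⟩
    rw [rpow_exp_le_iff hx hy] at hlo
    rw [le_rpow_exp_iff hx hy] at hhi
    exact ⟨hy, abs_sub_le_iff.2 ⟨by linarith, by linarith⟩⟩
  · rintro ⟨hy, h⟩
    rw [abs_sub_le_iff] at h
    exact ⟨(rpow_exp_le_iff hx hy).2 (by linarith), (le_rpow_exp_iff hx hy).2 (by linarith)⟩

theorem hasDerivAt_log_neg_log {φ : ℝ → ℝ} {c s : ℝ} (hφ : HasDerivAt φ (-φ s * c) s)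
    (hs : φ s ∈ Ioo 0 1) :
    HasDerivAt (fun r => log (-log (φ r))) (c / -log (φ s)) s := by
  have hneg_log : HasDerivAt (fun r => -log (φ r)) c s := by
    have := (hφ.log hs.1.ne').neg
    rwa [neg_mul, neg_div, neg_neg, mul_div_cancel_left₀ _ hs.1.ne'] at this
  exact hneg_log.log (neg_pos.2 (log_neg hs.1 hs.2)).ne'

theorem abs_sub_le_sub_of_abs_deriv_le {f F f' F' : ℝ → ℝ} {a b : ℝ} (hab : a ≤ b)
    (hf : ContinuousOn f (Icc a b)) (hF : ContinuousOn F (Icc a b))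
    (hf' : ∀ s ∈ Ioo a b, HasDerivAt f (f' s) s) (hF' : ∀ s ∈ Ioo a b, HasDerivAt F (F' s) s)
    (hle : ∀ s ∈ Ioo a b, |f' s| ≤ F' s) :
    |f b - f a| ≤ F b - F a := by
  have hsub : MonotoneOn (fun s => F s - f s) (Icc a b) := by
    refine monotoneOn_of_hasDerivWithinAt_nonneg (convex_Icc a b) (f' := F' - f') (hF.sub hf)
      ?_ ?_ <;> rw [interior_Icc]
    · exact fun s hs => ((hF' s hs).sub (hf' s hs)).hasDerivWithinAt
    · exact fun s hs => sub_nonneg.2 ((le_abs_self _).trans (hle s hs))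
  have hadd : MonotoneOn (fun s => f s + F s) (Icc a b) := by
    refine monotoneOn_of_hasDerivWithinAt_nonneg (convex_Icc a b) (f' := f' + F') (hf.add hF)
      ?_ ?_ <;> rw [interior_Icc]
    · exact fun s hs => ((hf' s hs).add (hF' s hs)).hasDerivWithinAt
    · exact fun s hs => neg_le_iff_add_nonneg'.1 ((neg_le_abs (f' s)).trans (hle s hs))
  have ha : a ∈ Icc a b := left_mem_Icc.2 hab
  have hb : b ∈ Icc a b := right_mem_Icc.2 hab
  have h₁ := hsub ha hb hab
  have h₂ := hadd ha hb hab
  exact abs_sub_le_iff.2 ⟨by linarith, by linarith⟩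

theorem hasDerivAt_integral_of_continuousOn {m : ℝ → ℝ} {a b s : ℝ}
    (hm : ContinuousOn m (Icc a b)) (hs : s ∈ Ioo a b) :
    HasDerivAt (fun t => ∫ u in a..t, m u) (m s) s := by
  have hint : IntervalIntegrable m volume a s :=
    (hm.mono (Icc_subset_Icc le_rfl hs.2.le)).intervalIntegrable_of_Icc hs.1.le
  have hmeas : StronglyMeasurableAtFilter m (𝓝 s) volume :=
    (hm.mono Ioo_subset_Icc_self).stronglyMeasurableAtFilter isOpen_Ioo s hs
  exact intervalIntegral.integral_hasDerivAt_right hint hmeas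
    (hm.continuousAt (Icc_mem_nhds hs.1 hs.2))

theorem continuousOn_integral_of_continuousOn {m : ℝ → ℝ} {a b : ℝ}
    (hm : ContinuousOn m (Icc a b)) : ContinuousOn (fun t => ∫ u in a..t, m u) (Icc a b) := by
  intro t ht
  have hab : a ≤ b := ht.1.trans ht.2
  have hint : IntegrableOn m (uIcc a b) volume := by
    rw [uIcc_of_le hab]
    exact hm.integrableOn_Icc
  have := intervalIntegral.continuousOn_primitive_interval hint
  rw [uIcc_of_le hab] at this
  exact this t ht

theorem abs_log_neg_log_sub_le_of_hasDerivAt {φ m M : ℝ → ℝ} {Ω : ℝ → ℝ → ℝ} {t s : ℝ}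
    (hts : t ≤ s) (hφ : ∀ r ∈ Icc t s, HasDerivAt φ (-φ r * Ω r (φ r)) r)
    (hφ_mem : ∀ r ∈ Icc t s, φ r ∈ Ioo 0 1)
    (hM : ContinuousOn M (Icc t s)) (hM' : ∀ r ∈ Ioo t s, HasDerivAt M (m r) r)
    (hΩ : ∀ r ∈ Ioo t s, ∀ z ∈ Ioo 0 1, |Ω r z| ≤ m r * -log z) :
    |log (-log (φ s)) - log (-log (φ t))| ≤ M s - M t := by
  have hG : ∀ r ∈ Icc t s,
      HasDerivAt (fun r => log (-log (φ r))) (Ω r (φ r) / -log (φ r)) r := fun r hr =>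
    hasDerivAt_log_neg_log (hφ r hr) (hφ_mem r hr)
  refine abs_sub_le_sub_of_abs_deriv_le hts
    (fun r hr => (hG r hr).continuousAt.continuousWithinAt) hM
    (fun r hr => hG r (Ioo_subset_Icc_self hr)) hM' fun r hr => ?_
  have hφr := hφ_mem r (Ioo_subset_Icc_self hr)
  have hlog : 0 < -log (φ r) := neg_pos.2 (log_neg hφr.1 hφr.2)
  rw [abs_div, abs_of_pos hlog, div_le_iff₀ hlog]
  exact hΩ r hr _ hφr

theorem mem_Icc_rpow_exp_integral_of_hasDerivAt {φ m : ℝ → ℝ} {Ω : ℝ → ℝ → ℝ} {T x : ℝ}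
    (hx : x ∈ Ioo 0 1) (hφ0 : φ 0 = x)
    (hφ : ∀ t ∈ Icc 0 T, HasDerivAt φ (-φ t * Ω t (φ t)) t) (hm : ContinuousOn m (Icc 0 T))
    (hΩ : ∀ t ∈ Icc 0 T, ∀ z ∈ Ioo 0 1, |Ω t z| ≤ m t * -log z) :
    ∀ t ∈ Icc 0 T, φ t ∈ Icc (x ^ exp (∫ s in 0..t, m s)) (x ^ exp (-∫ s in 0..t, m s)) := by
  set M : ℝ → ℝ := fun t => ∫ s in 0..t, m s
  set S : Set ℝ := {t | φ t ∈ Icc (x ^ exp (M t)) (x ^ exp (-M t))}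
  have hMc : ContinuousOn M (Icc 0 T) := continuousOn_integral_of_continuousOn hm
  have hφc : ContinuousOn φ (Icc 0 T) := fun t ht => (hφ t ht).continuousAt.continuousWithinAt
  have hpow : ∀ {f : ℝ → ℝ}, ContinuousOn f (Icc 0 T) →
      ContinuousOn (fun t => x ^ exp (f t)) (Icc 0 T) := fun hf =>
    continuousOn_const.rpow (continuous_exp.comp_continuousOn hf) fun _ _ => Or.inl hx.1.ne'
  have hS_closed : IsClosed (S ∩ Icc 0 T) := by
    have : S ∩ Icc 0 T =
        {t ∈ Icc 0 T | x ^ exp (M t) ≤ φ t} ∩ {t ∈ Icc 0 T | φ t ≤ x ^ exp (-M t)} := by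
      ext t
      simp only [S, mem_inter_iff, mem_ofPred_eq, mem_Icc]
      tauto
    rw [this]
    exact (isClosed_Icc.isClosed_le (hpow hMc) hφc).inter
      (isClosed_Icc.isClosed_le hφc (hpow hMc.neg))
  refine fun t ht => hS_closed.Icc_subset_of_forall_mem_nhdsWithin ?_ ?_ ht
  · simp [S, M, hφ0]
  rintro t ⟨htS, ht0, htT⟩
  obtain ⟨hφt, hGt⟩ := (mem_Icc_rpow_exp_iff hx).1 htS
  obtain ⟨l, u, ⟨hlt, htu⟩, hu⟩ := mem_nhds_iff_exists_Ioo_subset.1 (Filter.inter_mem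
    ((hφ t ⟨ht0, htT.le⟩).continuousAt.preimage_mem_nhds (Ioo_mem_nhds hφt.1 hφt.2))
    (Iio_mem_nhds htT))
  filter_upwards [Ioo_mem_nhdsGT htu] with s hs
  have hJ : ∀ r ∈ Icc t s, r ∈ Ico 0 T ∧ φ r ∈ Ioo 0 1 := fun r hr =>
    have hr' := hu ⟨by linarith [hr.1], hr.2.trans_lt hs.2⟩
    ⟨⟨ht0.trans hr.1, hr'.2⟩, hr'.1⟩
  have hJ_Icc : Icc t s ⊆ Icc 0 T := fun r hr => Ico_subset_Icc_self (hJ r hr).1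
  have hGs := abs_log_neg_log_sub_le_of_hasDerivAt hs.1.le (fun r hr => hφ r (hJ_Icc hr))
    (fun r hr => (hJ r hr).2) (hMc.mono hJ_Icc)
    (fun r hr => hasDerivAt_integral_of_continuousOn hm
      ⟨ht0.trans_lt hr.1, (hJ r (Ioo_subset_Icc_self hr)).1.2⟩)
    fun r hr => hΩ r (hJ_Icc (Ioo_subset_Icc_self hr))
  refine (mem_Icc_rpow_exp_iff hx).2 ⟨(hJ s ⟨hs.1.le, le_rfl⟩).2, ?_⟩
  calc |log (-log (φ s)) - log (-log x)|
      ≤ |log (-log (φ s)) - log (-log (φ t))| + |log (-log (φ t)) - log (-log x)| :=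
        abs_sub_le _ _ _
    _ ≤ M s - M t + M t := add_le_add hGs hGt
    _ = M s := sub_add_cancel _ _

theorem characteristic_bounds_general (T : ℝ) (ω ρ : ℝ → ℝ → ℝ)
    (hsol : IsClassicalSolution ω ρ (Icc 0 T))
    (x : ℝ) (hx : x ∈ Ioo (0:ℝ) 1) (φ : ℝ → ℝ) (hφ0 : φ 0 = x)
    (hφ : ∀ t ∈ Icc (0:ℝ) T, HasDerivAt φ (uF ω t (φ t)) t) :
    ∀ t ∈ Icc (0:ℝ) T,
      x ^ Real.exp (∫ s in (0:ℝ)..t, supAbs (fun y => ω s y)) ≤ φ t ∧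
      φ t ≤ x ^ Real.exp (-∫ s in (0:ℝ)..t, supAbs (fun y => ω s y)) := by
  have hω : ContinuousOn (fun p : ℝ × ℝ => ω p.1 p.2) (Icc 0 T ×ˢ Icc 0 1) :=
    hsol.1.continuousOn
  have hω_le : ∀ t ∈ Icc 0 T, ∀ y ∈ Icc 0 1, |ω t y| ≤ supAbs (ω t) := fun t ht y hy =>
    abs_le_supAbs (hω.comp (Continuous.prodMk_right t).continuousOn fun _ hy => ⟨ht, hy⟩) hy
  exact mem_Icc_rpow_exp_integral_of_hasDerivAt hx hφ0 hφ (continuousOn_supAbs hω)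
    fun t ht z hz => abs_OmegaF_le hz fun y hy => hω_le t ht y ⟨hz.1.le.trans hy.1.le, hy.2⟩

/-- **Bounds on characteristics.** For a classical solution `(ω,ρ)` on `[0,T]`
and the characteristic `φ` through `x ∈ (0,1)`, setting
`M(t) = ∫_0^t ‖ω(s)‖_{L^∞} ds`, one has `x^{exp(M(t))} ≤ φ(t) ≤ x^{exp(-M(t))}`. -/
theorem characteristic_bounds (T : ℝ) (hT : 0 ≤ T) (ω ρ : ℝ → ℝ → ℝ)
    (hsol : IsClassicalSolution ω ρ (Icc 0 T))
    (x : ℝ) (hx : x ∈ Ioo (0:ℝ) 1) (φ : ℝ → ℝ) (hφ0 : φ 0 = x)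
    (hφ : ∀ t ∈ Icc (0:ℝ) T, HasDerivAt φ (uF ω t (φ t)) t) :
    ∀ t ∈ Icc (0:ℝ) T,
      x ^ Real.exp (∫ s in (0:ℝ)..t, supAbs (fun y => ω s y)) ≤ φ t ∧
      φ t ≤ x ^ Real.exp (-∫ s in (0:ℝ)..t, supAbs (fun y => ω s y)) :=
  characteristic_bounds_general T ω ρ hsol x hx φ hφ0 hφ
end

section
/- Let (ω,ρ) be a classical solution of the 1D model Boussinesq system on [0,T] whose initial data satisfy: ρ₀ is nonincreasing on [1/2,1] and ω₀(x) = 0 for all x ∈ [1/2,1]. Assume also that for each t the map x ↦ φ_t(x) is strictly increasing on [0,1] (characteristics do not cross). Then for every t ∈ [0,T]: ω(t,x) ≤ 0 for all x ∈ [φ_t(1/2), 1], and the function t ↦ φ_t(1/2) is nondecreasing on [0,T]. -/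
open MeasureTheory Set

/-!
Along a characteristic, `ρ` is transported and `ω` changes at rate `∂ₓρ`. If `|ω| ≤ M`,
then `|u(t,y)| ≤ M y log (1/y)` and `|u(t,y)| ≤ M (1 - y)`, so `exp (-exp ((M+1) t))` and
`1 - (1-x) exp (-(M+1) t) / 2` are barriers that keep the characteristic from `x ∈ [1/2,1)`
inside `(δ,1)` for a fixed `δ > 0`. On `[δ,1]` the velocity is Lipschitz, so by Grönwall `φ_t`
is continuous on `[1/2,1)` and tends to `1` at `1` (the constant `1` is a characteristic);
hence `φ_t` maps `[1/2,1)` onto `[φ_t(1/2),1)`. As characteristics do not cross, `ρ(t,·)` is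
nonincreasing there, so `∂ₓρ ≤ 0` and `ω`, which starts at `0`, stays `≤ 0` on
`[φ_t(1/2),1]`. Then `Ω(t,φ_t(1/2)) ≤ 0`, i.e. `u ≥ 0` at `φ_t(1/2)`.
-/

open Filter Topology intervalIntegral

theorem forall_pos_of_deriv_pos_of_eq_zero {ι : Type*} [Finite ι] {g g' : ι → ℝ → ℝ}
    {T : ℝ}
    (hg : ∀ i, ∀ t ∈ Icc 0 T, HasDerivAt (g i) (g' i t) t) (h₀ : ∀ i, 0 < g i 0)
    (hcontact : ∀ t ∈ Icc 0 T, (∀ j, 0 ≤ g j t) → ∀ i, g i t = 0 → 0 < g' i t) :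
    ∀ t ∈ Icc 0 T, ∀ i, 0 < g i t := by
  by_contra! hbad
  set S := ⋃ i, Icc 0 T ∩ g i ⁻¹' Iic 0
  have hcont : ∀ i, ContinuousOn (g i) (Icc 0 T) := fun i t ht =>
    (hg i t ht).continuousAt.continuousWithinAt
  have hS : IsCompact S := isCompact_Icc.of_isClosed_subset
    (isClosed_iUnion_of_finite fun i =>
      (hcont i).preimage_isClosed_of_isClosed isClosed_Icc isClosed_Iic)
    (iUnion_subset fun i => inter_subset_left)
  obtain ⟨t, hti, i, hit⟩ := hbad
  obtain ⟨t₀, ⟨-, ⟨i₀, rfl⟩, ht₀T, hi₀⟩, ht₀least⟩ :=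
    hS.exists_isLeast ⟨t, mem_iUnion.2 ⟨i, hti, hit⟩⟩
  have hbefore : ∀ s ∈ Ico 0 t₀, ∀ j, 0 < g j s := fun s hs j => by
    by_contra! h
    exact (ht₀least (mem_iUnion.2 ⟨j, ⟨hs.1, hs.2.le.trans ht₀T.2⟩, h⟩)).not_gt hs.2
  have ht₀pos : 0 < t₀ := ht₀T.1.lt_of_ne (by rintro rfl; exact (h₀ i₀).not_ge hi₀)
  have hleft : ∀ᶠ s in 𝓝[<] t₀, ∀ j, 0 < g j s := by
    filter_upwards [Ioo_mem_nhdsLT ht₀pos] with s hs using hbefore s ⟨hs.1.le, hs.2⟩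
  have hnonneg : ∀ j, 0 ≤ g j t₀ := fun j =>
    ge_of_tendsto ((hg j t₀ ht₀T).continuousAt.tendsto.mono_left nhdsWithin_le_nhds)
      (hleft.mono fun s hs => (hs j).le)
  have hzero : g i₀ t₀ = 0 := le_antisymm hi₀ (hnonneg i₀)
  have hslope : Tendsto (slope (g i₀) t₀) (𝓝[<] t₀) (𝓝 (g' i₀ t₀)) :=
    (hasDerivAt_iff_tendsto_slope.1 (hg i₀ t₀ ht₀T)).mono_left
      (nhdsWithin_mono _ fun _ hs => ne_of_lt hs)
  have : g' i₀ t₀ ≤ 0 := by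
    refine le_of_tendsto hslope ?_
    filter_upwards [hleft, self_mem_nhdsWithin] with s hs hst
    rw [slope_def_field, hzero, sub_zero]
    exact div_nonpos_of_nonneg_of_nonpos (hs i₀).le (sub_nonpos.2 (le_of_lt hst))
  exact this.not_gt (hcontact t₀ ht₀T hnonneg i₀ hzero)

theorem dist_le_of_trajectories_of_hasDerivAt {E : Type*} [NormedAddCommGroup E] [NormedSpace ℝ E]
    {v : ℝ → E → E} {s : Set E} {K : NNReal} {f g : ℝ → E} {T : ℝ}
    (hv : ∀ t ∈ Ico 0 T, LipschitzOnWith K (v t) s)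
    (hf : ∀ t ∈ Icc 0 T, HasDerivAt f (v t (f t)) t)
    (hg : ∀ t ∈ Icc 0 T, HasDerivAt g (v t (g t)) t)
    (hfs : ∀ t ∈ Icc 0 T, f t ∈ s) (hgs : ∀ t ∈ Icc 0 T, g t ∈ s) :
    ∀ t ∈ Icc 0 T, dist (f t) (g t) ≤ dist (f 0) (g 0) * Real.exp (K * t) := by
  intro t ht
  simpa using dist_le_of_trajectories_ODE_of_mem hv
    (fun t ht => (hf t ht).continuousAt.continuousWithinAt)
    (fun t ht => (hf t (Ico_subset_Icc_self ht)).hasDerivWithinAt)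
    (fun t ht => hfs t (Ico_subset_Icc_self ht))
    (fun t ht => (hg t ht).continuousAt.continuousWithinAt)
    (fun t ht => (hg t (Ico_subset_Icc_self ht)).hasDerivWithinAt)
    (fun t ht => hgs t (Ico_subset_Icc_self ht)) le_rfl t ht

theorem hasDerivAt_comp_curve {F : ℝ → ℝ → ℝ} {γ : ℝ → ℝ} {t γ' : ℝ}
    (hF : DifferentiableAt ℝ (fun p : ℝ × ℝ => F p.1 p.2) (t, γ t))
    (hγ : HasDerivAt γ γ' t) :
    HasDerivAt (fun s => F s (γ s))
      (deriv (fun s => F s (γ t)) t + γ' * deriv (F t) (γ t)) t := by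
  set L := fderiv ℝ (fun p : ℝ × ℝ => F p.1 p.2) (t, γ t)
  have hL := hF.hasFDerivAt
  have ht : HasDerivAt (fun s => F s (γ t)) (L (1, 0)) t :=
    hL.comp_hasDerivAt (f := fun s => (s, γ t)) t
      ((hasDerivAt_id t).prodMk (hasDerivAt_const t (γ t)))
  have hx : HasDerivAt (F t) (L (0, 1)) (γ t) :=
    hL.comp_hasDerivAt (f := fun y => (t, y)) (γ t)
      ((hasDerivAt_const (γ t) t).prodMk (hasDerivAt_id (γ t)))
  have hsplit : ((1 : ℝ), γ') = ((1 : ℝ), (0 : ℝ)) + γ' • ((0 : ℝ), (1 : ℝ)) := by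
    simp
  rw [ht.deriv, hx.deriv, ← smul_eq_mul, ← L.map_smul, ← map_add, ← hsplit]
  exact hL.comp_hasDerivAt (f := fun s => (s, γ s)) t ((hasDerivAt_id t).prodMk hγ)

theorem AntitoneOn.image_of_strictMonoOn_comp {α β γ : Type*} [LinearOrder α] [Preorder β]
    [Preorder γ] {f : β → γ} {g : α → β} {s : Set α} (hg : StrictMonoOn g s)
    (hfg : AntitoneOn (f ∘ g) s) : AntitoneOn f (g '' s) := by
  rintro _ ⟨a, ha, rfl⟩ _ ⟨b, hb, rfl⟩ hab
  exact hfg ha hb ((hg.le_iff_le ha hb).1 hab)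

theorem ContinuousOn.comp_curve {F : ℝ → ℝ → ℝ} {γ : ℝ → ℝ} {s u : Set ℝ}
    (hF : ContinuousOn (fun p : ℝ × ℝ => F p.1 p.2) (s ×ˢ u)) (hγ : ContinuousOn γ s)
    (hγu : MapsTo γ s u) : ContinuousOn (fun t => F t (γ t)) s :=
  hF.comp (continuousOn_id.prodMk hγ) fun _ ht => ⟨ht, hγu ht⟩

theorem ContinuousOn.nonpos_of_nonpos_on_Ico {f : ℝ → ℝ} {a b : ℝ}
    (hf : ContinuousOn f (Icc a b)) (hab : a < b) (h : ∀ y ∈ Ico a b, f y ≤ 0) :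
    ∀ y ∈ Icc a b, f y ≤ 0 := by
  rw [← closure_Ico hab.ne] at hf ⊢
  exact le_on_closure h hf continuousOn_const

theorem deriv_nonpos_of_antitoneOn_Ico {f : ℝ → ℝ} {a b y : ℝ} (hf : AntitoneOn f (Ico a b))
    (hy : y ∈ Ico a b) : deriv f y ≤ 0 := by
  by_cases hd : DifferentiableAt ℝ f y
  · refine hd.hasDerivAt.hasDerivWithinAt.nonpos_of_antitoneOn ?_
      (hf.mono (Ico_subset_Ico_left hy.1))
    rw [accPt_principal_iff_nhdsWithin, Ico_sdiff_left]
    exact left_nhdsWithin_Ioo_neBot hy.2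
  · rw [deriv_zero_of_not_differentiableAt hd]

section Velocity

variable {ω : ℝ → ℝ → ℝ} {t M : ℝ}

theorem intervalIntegrable_div_self {f : ℝ → ℝ} (hf : ContinuousOn f (Icc 0 1)) {a b : ℝ}
    (ha : 0 < a) (hab : a ≤ b) (hb : b ≤ 1) :
    IntervalIntegrable (fun y => f y / y) volume a b :=
  ((hf.mono (Icc_subset_Icc ha.le hb)).div continuousOn_id fun _ hy =>
    (ha.trans_le hy.1).ne').intervalIntegrable_of_Icc hab

theorem uF_one : uF ω t 1 = 0 := by
  simp [uF, OmegaF]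

theorem abs_OmegaF_le_s16 (hω : ContinuousOn (ω t) (Icc 0 1))
    (hM : ∀ y ∈ Icc (0:ℝ) 1, |ω t y| ≤ M)
    {y : ℝ} (hy : y ∈ Ioc 0 1) : |OmegaF ω t y| ≤ M * Real.log (1 / y) := by
  have hpos : ∀ z ∈ Icc y 1, 0 < z := fun z hz => hy.1.trans_le hz.1
  calc |OmegaF ω t y| ≤ ∫ z in y..1, |ω t z / z| := abs_integral_le_integral_abs hy.2
    _ ≤ ∫ z in y..1, M * (1 / z) := by
        refine integral_mono_on hy.2 (intervalIntegrable_div_self hω hy.1 hy.2 le_rfl).abs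
          ((continuousOn_const.mul (continuousOn_const.div continuousOn_id fun z hz =>
            (hpos z hz).ne')).intervalIntegrable_of_Icc hy.2) fun z hz => ?_
        rw [abs_div, abs_of_pos (hpos z hz), ← div_eq_mul_one_div]
        exact div_le_div_of_nonneg_right (hM z ⟨(hpos z hz).le, hz.2⟩) (hpos z hz).le
    _ = M * Real.log (1 / y) := by
        rw [intervalIntegral.integral_const_mul,
          integral_one_div fun h => (hpos 0 (by simpa [hy.2] using h)).ne rfl]

theorem abs_uF_le_mul_log (hω : ContinuousOn (ω t) (Icc 0 1))
    (hM : ∀ y ∈ Icc (0:ℝ) 1, |ω t y| ≤ M)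
    {y : ℝ} (hy : y ∈ Ioc 0 1) : |uF ω t y| ≤ M * (y * Real.log (1 / y)) := by
  rw [uF, abs_mul, abs_neg, abs_of_pos hy.1, mul_left_comm]
  exact mul_le_mul_of_nonneg_left (abs_OmegaF_le_s16 hω hM hy) hy.1.le

theorem abs_uF_le (hω : ContinuousOn (ω t) (Icc 0 1))
    (hM : ∀ y ∈ Icc (0:ℝ) 1, |ω t y| ≤ M)
    {y : ℝ} (hy : y ∈ Ioc 0 1) : |uF ω t y| ≤ M * (1 - y) := by
  have hM0 : 0 ≤ M := (abs_nonneg _).trans (hM 0 ⟨le_rfl, zero_le_one⟩)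
  have hlog : y * Real.log (1 / y) ≤ 1 - y := by
    have := Real.log_le_sub_one_of_pos (one_div_pos.2 hy.1)
    calc y * Real.log (1 / y) ≤ y * (1 / y - 1) := mul_le_mul_of_nonneg_left this hy.1.le
      _ = 1 - y := by rw [mul_sub, mul_one_div_cancel hy.1.ne', mul_one]
  exact (abs_uF_le_mul_log hω hM hy).trans (mul_le_mul_of_nonneg_left hlog hM0)

theorem neg_mul_log_lt_uF (hω : ContinuousOn (ω t) (Icc 0 1))
    (hM : ∀ y ∈ Icc (0:ℝ) 1, |ω t y| ≤ M) {y : ℝ} (hy : y ∈ Ioo 0 1) :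
    -((M + 1) * (y * Real.log (1 / y))) < uF ω t y := by
  have hpos : 0 < y * Real.log (1 / y) := mul_pos hy.1 (Real.log_pos (one_lt_one_div hy.1 hy.2))
  linarith [(abs_le.1 (abs_uF_le_mul_log hω hM ⟨hy.1, hy.2.le⟩)).1]

theorem uF_lt (hω : ContinuousOn (ω t) (Icc 0 1))
    (hM : ∀ y ∈ Icc (0:ℝ) 1, |ω t y| ≤ M)
    {y : ℝ} (hy : y ∈ Ioo 0 1) : uF ω t y < (M + 1) * (1 - y) := by
  linarith [(abs_le.1 (abs_uF_le hω hM ⟨hy.1, hy.2.le⟩)).2, sub_pos.2 hy.2]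

theorem abs_uF_sub_uF_le (hω : ContinuousOn (ω t) (Icc 0 1))
    (hM : ∀ y ∈ Icc (0:ℝ) 1, |ω t y| ≤ M)
    {δ a b : ℝ} (hδ : 0 < δ) (ha : δ ≤ a) (hab : a ≤ b) (hb : b ≤ 1) :
    |uF ω t a - uF ω t b| ≤ M * (1 + Real.log (1 / δ)) * (b - a) := by
  have ha0 : 0 < a := hδ.trans_le ha
  have hb0 : 0 < b := ha0.trans_le hab
  have hsplit :
      uF ω t a - uF ω t b = -(a * ∫ z in a..b, ω t z / z) + (b - a) * OmegaF ω t b := by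
    rw [uF, uF, OmegaF, OmegaF, ← integral_add_adjacent_intervals
      (intervalIntegrable_div_self hω ha0 hab hb) (intervalIntegrable_div_self hω hb0 hb le_rfl)]
    ring
  have hnear : a * |∫ z in a..b, ω t z / z| ≤ M * (b - a) := by
    have := norm_integral_le_of_norm_le_const (a := a) (b := b) (f := fun z => ω t z / z)
      (C := M / a) fun z hz => by
        rw [uIoc_of_le hab] at hz
        have hz0 : 0 < z := ha0.trans hz.1
        rw [Real.norm_eq_abs, abs_div, abs_of_pos hz0]
        exact div_le_div₀ ((abs_nonneg _).trans (hM 0 ⟨le_rfl, zero_le_one⟩))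
          (hM z ⟨hz0.le, hz.2.trans hb⟩) ha0 hz.1.le
    rw [Real.norm_eq_abs, abs_of_nonneg (sub_nonneg.2 hab)] at this
    calc a * |∫ z in a..b, ω t z / z| ≤ a * (M / a * (b - a)) :=
          mul_le_mul_of_nonneg_left this ha0.le
      _ = M * (b - a) := by field_simp
  have hfar : |OmegaF ω t b| ≤ M * Real.log (1 / δ) :=
    (abs_OmegaF_le_s16 hω hM ⟨hb0, hb⟩).trans (mul_le_mul_of_nonneg_left
      (Real.log_le_log (by positivity) (one_div_le_one_div_of_le hδ (ha.trans hab)))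
      ((abs_nonneg _).trans (hM 0 ⟨le_rfl, zero_le_one⟩)))
  calc |uF ω t a - uF ω t b|
      ≤ a * |∫ z in a..b, ω t z / z| + (b - a) * |OmegaF ω t b| := by
        rw [hsplit]
        refine (abs_add_le _ _).trans_eq ?_
        rw [abs_neg, abs_mul, abs_mul, abs_of_pos ha0, abs_of_nonneg (sub_nonneg.2 hab)]
    _ ≤ M * (b - a) + (b - a) * (M * Real.log (1 / δ)) :=
        add_le_add hnear (mul_le_mul_of_nonneg_left hfar (sub_nonneg.2 hab))
    _ = M * (1 + Real.log (1 / δ)) * (b - a) := by ring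

theorem lipschitzOnWith_uF (hω : ContinuousOn (ω t) (Icc 0 1))
    (hM : ∀ y ∈ Icc (0:ℝ) 1, |ω t y| ≤ M) {δ : ℝ} (hδ : 0 < δ) :
    LipschitzOnWith (Real.toNNReal (M * (1 + Real.log (1 / δ)))) (uF ω t) (Icc δ 1) := by
  refine LipschitzOnWith.of_dist_le' fun a ha b hb => ?_
  rw [Real.dist_eq, Real.dist_eq]
  rcases le_total a b with hab | hba
  · rw [abs_of_nonpos (sub_nonpos.2 hab), neg_sub]
    exact abs_uF_sub_uF_le hω hM hδ ha.1 hab hb.2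
  · rw [abs_sub_comm, abs_of_nonneg (sub_nonneg.2 hba)]
    exact abs_uF_sub_uF_le hω hM hδ hb.1 hba ha.2

theorem uF_nonneg {y : ℝ} (hy : y ∈ Ioc 0 1) (hω : ∀ z ∈ Icc y 1, ω t z ≤ 0) :
    0 ≤ uF ω t y := by
  have : 0 ≤ ∫ z in y..1, -(ω t z / z) :=
    integral_nonneg hy.2 fun z hz => neg_nonneg.2 (div_nonpos_of_nonpos_of_nonneg (hω z hz)
      (hy.1.le.trans hz.1))
  rw [intervalIntegral.integral_neg] at this
  rw [uF, OmegaF, neg_mul, ← mul_neg]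
  exact mul_nonneg hy.1.le this

end Velocity

def IsCharacteristicFlow (ω φ : ℝ → ℝ → ℝ) (T : ℝ) : Prop :=
  (∀ x ∈ Icc (0:ℝ) 1, φ 0 x = x) ∧
    ∀ x ∈ Icc (0:ℝ) 1, ∀ t ∈ Icc (0:ℝ) T,
      HasDerivAt (fun s => φ s x) (uF ω t (φ t x)) t

namespace IsCharacteristicFlow

variable {ω φ : ℝ → ℝ → ℝ} {T M : ℝ}

theorem exp_neg_exp_lt_and_lt (hφ : IsCharacteristicFlow ω φ T)
    (hω : ∀ t ∈ Icc 0 T, ContinuousOn (ω t) (Icc 0 1))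
    (hM : ∀ t ∈ Icc 0 T, ∀ y ∈ Icc (0:ℝ) 1, |ω t y| ≤ M) {x : ℝ}
    (hx : x ∈ Ico (1/2 : ℝ) 1) :
    ∀ t ∈ Icc 0 T, Real.exp (-Real.exp ((M + 1) * t)) < φ t x ∧
      φ t x < 1 - (1 - x) * Real.exp (-((M + 1) * t)) / 2 := by
  set b : ℝ → ℝ := fun s => Real.exp (-Real.exp ((M + 1) * s))
  set B : ℝ → ℝ := fun s => 1 - (1 - x) * Real.exp (-((M + 1) * s)) / 2
  have hx01 : x ∈ Icc (0:ℝ) 1 := ⟨by linarith [hx.1], hx.2.le⟩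
  have hlin : ∀ s : ℝ, HasDerivAt (fun r => (M + 1) * r) (M + 1) s := fun s => by
    simpa using (hasDerivAt_id s).const_mul (M + 1)
  have hb : ∀ s, HasDerivAt b (-((M + 1) * (b s * Real.exp ((M + 1) * s)))) s := fun s =>
    (hlin s).exp.neg.exp.congr_deriv (by simp only [Pi.neg_apply, b]; ring)
  have hB : ∀ s, HasDerivAt B ((M + 1) * (1 - B s)) s := fun s =>
    ((((hlin s).neg.exp).const_mul (1 - x)).div_const 2).const_sub 1 |>.congr_deriv
      (by simp only [Pi.neg_apply, B]; ring)
  have hB1 : ∀ s, B s < 1 := fun s => by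
    have := Real.exp_pos (-((M + 1) * s))
    simp only [B]
    nlinarith [hx.2]
  have key := forall_pos_of_deriv_pos_of_eq_zero (T := T)
    (g := ![fun s => φ s x - b s, fun s => B s - φ s x])
    (g' := ![fun s => uF ω s (φ s x) + (M + 1) * (b s * Real.exp ((M + 1) * s)),
      fun s => (M + 1) * (1 - B s) - uF ω s (φ s x)]) ?_ ?_ ?_
  · intro t ht
    simpa only [Fin.forall_fin_two, Matrix.cons_val_zero, Matrix.cons_val_one, sub_pos]
      using key t ht
  · simp only [Fin.forall_fin_two, Matrix.cons_val_zero, Matrix.cons_val_one]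
    exact ⟨fun t ht => ((hφ.2 x hx01 t ht).sub (hb t)).congr_deriv (by ring),
      fun t ht => (hB t).sub (hφ.2 x hx01 t ht)⟩
  · simp only [Fin.forall_fin_two, Matrix.cons_val_zero, Matrix.cons_val_one, hφ.1 x hx01, b, B,
      mul_zero, neg_zero, Real.exp_zero, mul_one, sub_pos]
    exact ⟨Real.exp_neg_one_lt_half.trans_le hx.1, by linarith [hx.2]⟩
  · intro t ht hnonneg
    simp only [Fin.forall_fin_two, Matrix.cons_val_zero, Matrix.cons_val_one, sub_nonneg,
      sub_eq_zero, sub_pos] at hnonneg ⊢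
    have hφt : φ t x ∈ Ioo 0 1 :=
      ⟨(Real.exp_pos _).trans_le hnonneg.1, hnonneg.2.trans_lt (hB1 t)⟩
    refine ⟨fun heq => ?_, fun heq => ?_⟩
    · have hlog : Real.log (1 / φ t x) = Real.exp ((M + 1) * t) := by
        rw [heq, one_div, Real.log_inv, Real.log_exp, neg_neg]
      have := neg_mul_log_lt_uF (hω t ht) (hM t ht) hφt
      rw [hlog] at this
      rw [← heq]
      linarith
    · rw [heq]
      exact uF_lt (hω t ht) (hM t ht) hφt

theorem exists_mem_Ioo (hφ : IsCharacteristicFlow ω φ T)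
    (hω : ContinuousOn (fun p : ℝ × ℝ => ω p.1 p.2) (Icc 0 T ×ˢ Icc 0 1)) :
    ∃ δ > 0, ∀ x ∈ Ico (1/2 : ℝ) 1, ∀ t ∈ Icc 0 T, φ t x ∈ Ioo δ 1 := by
  obtain ⟨M, hM⟩ := (isCompact_Icc.prod isCompact_Icc).exists_bound_of_continuousOn hω
  refine ⟨Real.exp (-Real.exp ((M + 1) * T)), Real.exp_pos _, fun x hx t ht => ?_⟩
  obtain ⟨hlow, hupp⟩ := hφ.exp_neg_exp_lt_and_lt (fun t ht => hω.uncurry_left t ht)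
    (fun t ht y hy => hM (t, y) ⟨ht, hy⟩) hx t ht
  have hM0 : 0 ≤ M := (norm_nonneg _).trans (hM (t, 0) ⟨ht, le_rfl, zero_le_one⟩)
  refine ⟨lt_of_le_of_lt ?_ hlow, hupp.trans_le ?_⟩
  · gcongr
    exact ht.2
  · have := Real.exp_pos (-((M + 1) * t))
    nlinarith [hx.2]

theorem exists_dist_le_mul_exp (hφ : IsCharacteristicFlow ω φ T)
    (hω : ContinuousOn (fun p : ℝ × ℝ => ω p.1 p.2) (Icc 0 T ×ˢ Icc 0 1)) :
    ∃ K : NNReal, ∀ t ∈ Icc 0 T, ∀ x ∈ Ico (1/2 : ℝ) 1,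
      (∀ x' ∈ Ico (1/2 : ℝ) 1, dist (φ t x) (φ t x') ≤ dist x x' * Real.exp (K * t)) ∧
      dist (φ t x) 1 ≤ dist x 1 * Real.exp (K * t) := by
  obtain ⟨δ, hδ, hmem⟩ := hφ.exists_mem_Ioo hω
  obtain ⟨M, hM⟩ := (isCompact_Icc.prod isCompact_Icc).exists_bound_of_continuousOn hω
  have hlip : ∀ t ∈ Ico 0 T, LipschitzOnWith (Real.toNNReal (M * (1 + Real.log (1 / δ))))
      (uF ω t) (Icc δ 1) := fun t ht =>
    lipschitzOnWith_uF (hω.uncurry_left t (Ico_subset_Icc_self ht))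
      (fun y hy => hM (t, y) ⟨Ico_subset_Icc_self ht, hy⟩) hδ
  have hsub : Ico (1/2 : ℝ) 1 ⊆ Icc 0 1 := fun x hx => ⟨by linarith [hx.1], hx.2.le⟩
  refine ⟨Real.toNNReal (M * (1 + Real.log (1 / δ))), fun t ht x hx =>
    ⟨fun x' hx' => ?_, ?_⟩⟩
  · simpa only [hφ.1 x (hsub hx), hφ.1 x' (hsub hx')] using
      dist_le_of_trajectories_of_hasDerivAt hlip (hφ.2 x (hsub hx)) (hφ.2 x' (hsub hx'))
        (fun s hs => Ioo_subset_Icc_self (hmem x hx s hs))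
        (fun s hs => Ioo_subset_Icc_self (hmem x' hx' s hs)) t ht
  · simpa only [hφ.1 x (hsub hx)] using
      dist_le_of_trajectories_of_hasDerivAt (g := fun _ => 1) hlip (hφ.2 x (hsub hx))
        (fun s _ => by simpa only [uF_one] using hasDerivAt_const s (1 : ℝ))
        (fun s hs => Ioo_subset_Icc_self (hmem x hx s hs))
        (fun _ _ => ⟨((hmem x hx t ht).1.trans (hmem x hx t ht).2).le, le_rfl⟩) t ht

theorem Ico_subset_image (hφ : IsCharacteristicFlow ω φ T)
    (hω : ContinuousOn (fun p : ℝ × ℝ => ω p.1 p.2) (Icc 0 T ×ˢ Icc 0 1)) {t : ℝ}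
    (ht : t ∈ Icc 0 T) : Ico (φ t (1/2)) 1 ⊆ φ t '' Ico (1/2) 1 := by
  obtain ⟨K, hK⟩ := hφ.exists_dist_le_mul_exp hω
  have hcont : ContinuousOn (φ t) (Ico (1/2) 1) :=
    (LipschitzOnWith.of_dist_le' fun x hx x' hx' => by
      rw [mul_comm]; exact (hK t ht x hx).1 x' hx').continuousOn
  have hlim : Tendsto (φ t) (𝓝[<] 1) (𝓝 1) := by
    rw [tendsto_iff_dist_tendsto_zero]
    have hx : Tendsto (fun x => dist x 1 * Real.exp (K * t)) (𝓝[<] (1:ℝ)) (𝓝 0) := by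
      have : Continuous fun x : ℝ => dist x 1 * Real.exp (K * t) := by fun_prop
      exact (this.tendsto' 1 0 (by simp)).mono_left nhdsWithin_le_nhds
    refine squeeze_zero' (Eventually.of_forall fun _ => dist_nonneg) ?_ hx
    filter_upwards [Ico_mem_nhdsLT (by norm_num : (1/2 : ℝ) < 1)] with x hx
    exact (hK t ht x hx).2
  exact isPreconnected_Ico.intermediate_value_Ico ⟨le_rfl, by norm_num⟩
    (le_principal_iff.2 (Ico_mem_nhdsLT (by norm_num))) hcont hlim

theorem monotoneOn_of_vorticity_nonpos (hφ : IsCharacteristicFlow ω φ T) {x : ℝ}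
    (hx : x ∈ Icc 0 1) (hmem : ∀ t ∈ Icc 0 T, φ t x ∈ Ioc 0 1)
    (hω : ∀ t ∈ Icc 0 T, ∀ y ∈ Icc (φ t x) 1, ω t y ≤ 0) :
    MonotoneOn (fun t => φ t x) (Icc 0 T) := by
  refine monotoneOn_of_deriv_nonneg (convex_Icc 0 T)
    (fun t ht => (hφ.2 x hx t ht).continuousAt.continuousWithinAt)
    (fun t ht => (hφ.2 x hx t (interior_subset ht)).differentiableAt.differentiableWithinAt)
    fun t ht => ?_
  rw [(hφ.2 x hx t (interior_subset ht)).deriv]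
  exact uF_nonneg (hmem t (interior_subset ht)) (hω t (interior_subset ht))

end IsCharacteristicFlow

namespace IsClassicalSolution

variable {ω ρ : ℝ → ℝ → ℝ} {T : ℝ} {γ : ℝ → ℝ}

theorem hasDerivAt_along_characteristic (hsol : IsClassicalSolution ω ρ (Icc 0 T)) {t : ℝ}
    (ht : t ∈ Ioo 0 T) (hγt : γ t ∈ Ioo 0 1) (hγ : HasDerivAt γ (uF ω t (γ t)) t) :
    HasDerivAt (fun s => ρ s (γ s)) 0 t ∧
      HasDerivAt (fun s => ω s (γ s)) (deriv (ρ t) (γ t)) t := by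
  have hnhds : Icc 0 T ×ˢ Icc (0:ℝ) 1 ∈ 𝓝 (t, γ t) :=
    prod_mem_nhds (Icc_mem_nhds ht.1 ht.2) (Icc_mem_nhds hγt.1 hγt.2)
  obtain ⟨hρpde, hωpde⟩ :=
    hsol.2.2 t (Ioo_subset_Icc_self ht) (γ t) (Ioo_subset_Icc_self hγt)
  constructor
  · have := hasDerivAt_comp_curve ((hsol.2.1.contDiffAt hnhds).differentiableAt one_ne_zero) hγ
    rwa [hρpde] at this
  · have := hasDerivAt_comp_curve ((hsol.1.contDiffAt hnhds).differentiableAt one_ne_zero) hγ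
    rwa [hωpde] at this

theorem density_along_characteristic_eq (hsol : IsClassicalSolution ω ρ (Icc 0 T))
    (hγ : ∀ t ∈ Icc 0 T, HasDerivAt γ (uF ω t (γ t)) t)
    (hγmem : ∀ t ∈ Icc 0 T, γ t ∈ Ioo 0 1)
    {t : ℝ} (ht : t ∈ Icc 0 T) : ρ t (γ t) = ρ 0 (γ 0) := by
  have hcont : ContinuousOn (fun s => ρ s (γ s)) (Icc 0 T) :=
    hsol.2.1.continuousOn.comp_curve (fun s hs => (hγ s hs).continuousAt.continuousWithinAt)
      fun s hs => Ioo_subset_Icc_self (hγmem s hs)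
  have hd : ∀ s ∈ interior (Icc 0 T), HasDerivAt (fun s => ρ s (γ s)) 0 s := fun s hs => by
    rw [interior_Icc] at hs
    exact (hsol.hasDerivAt_along_characteristic hs (hγmem s (Ioo_subset_Icc_self hs))
      (hγ s (Ioo_subset_Icc_self hs))).1
  have hdiff : DifferentiableOn ℝ (fun s => ρ s (γ s)) (interior (Icc 0 T)) :=
    fun s hs => (hd s hs).differentiableAt.differentiableWithinAt
  have h0 : (0:ℝ) ∈ Icc 0 T := ⟨le_rfl, ht.1.trans ht.2⟩
  exact le_antisymm
    (antitoneOn_of_deriv_nonpos (convex_Icc 0 T) hcont hdiff (fun s hs => (hd s hs).deriv.le)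
      h0 ht ht.1)
    (monotoneOn_of_deriv_nonneg (convex_Icc 0 T) hcont hdiff (fun s hs => (hd s hs).deriv.ge)
      h0 ht ht.1)

theorem vorticity_le_of_deriv_density_nonpos (hsol : IsClassicalSolution ω ρ (Icc 0 T))
    (hγ : ∀ t ∈ Icc 0 T, HasDerivAt γ (uF ω t (γ t)) t)
    (hγmem : ∀ t ∈ Icc 0 T, γ t ∈ Ioo 0 1)
    (hρ : ∀ t ∈ Ioo 0 T, deriv (ρ t) (γ t) ≤ 0) {t : ℝ} (ht : t ∈ Icc 0 T) :
    ω t (γ t) ≤ ω 0 (γ 0) := by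
  have hcont : ContinuousOn (fun s => ω s (γ s)) (Icc 0 T) :=
    hsol.1.continuousOn.comp_curve (fun s hs => (hγ s hs).continuousAt.continuousWithinAt)
      fun s hs => Ioo_subset_Icc_self (hγmem s hs)
  have hd : ∀ s ∈ interior (Icc 0 T),
      HasDerivAt (fun s => ω s (γ s)) (deriv (ρ s) (γ s)) s :=
    fun s hs => by
      rw [interior_Icc] at hs
      exact (hsol.hasDerivAt_along_characteristic hs (hγmem s (Ioo_subset_Icc_self hs))
        (hγ s (Ioo_subset_Icc_self hs))).2
  refine antitoneOn_of_deriv_nonpos (convex_Icc 0 T) hcont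
    (fun s hs => (hd s hs).differentiableAt.differentiableWithinAt) (fun s hs => ?_)
    ⟨le_rfl, ht.1.trans ht.2⟩ ht ht.1
  rw [(hd s hs).deriv]
  exact hρ s (interior_Icc (a := (0:ℝ)) ▸ hs)

end IsClassicalSolution

section Boussinesq

variable {T : ℝ} {ω ρ φ : ℝ → ℝ → ℝ}

theorem antitoneOn_density (hsol : IsClassicalSolution ω ρ (Icc 0 T))
    (hρ₀ : AntitoneOn (ρ 0) (Icc (1/2 : ℝ) 1)) (hφ : IsCharacteristicFlow ω φ T)
    (hnocross : ∀ t ∈ Icc 0 T, StrictMonoOn (φ t) (Icc 0 1)) {t : ℝ} (ht : t ∈ Icc 0 T) :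
    AntitoneOn (ρ t) (Ico (φ t (1/2)) 1) := by
  obtain ⟨δ, hδ, hmem⟩ := hφ.exists_mem_Ioo hsol.1.continuousOn
  have hsub : Ico (1/2 : ℝ) 1 ⊆ Icc 0 1 := fun x hx => ⟨by linarith [hx.1], hx.2.le⟩
  have htransport : ∀ x ∈ Ico (1/2 : ℝ) 1, ρ t (φ t x) = ρ 0 x := fun x hx => by
    rw [hsol.density_along_characteristic_eq (hφ.2 x (hsub hx))
      (fun s hs => Ioo_subset_Ioo_left hδ.le (hmem x hx s hs)) ht,
      hφ.1 x (hsub hx)]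
  refine (AntitoneOn.image_of_strictMonoOn_comp ((hnocross t ht).mono hsub)
    fun a ha b hb hab => ?_).mono (hφ.Ico_subset_image hsol.1.continuousOn ht)
  simp only [Function.comp_apply, htransport a ha, htransport b hb]
  exact hρ₀ (Ico_subset_Icc_self ha) (Ico_subset_Icc_self hb) hab

theorem vorticity_nonpos (hsol : IsClassicalSolution ω ρ (Icc 0 T))
    (hρ₀ : AntitoneOn (ρ 0) (Icc (1/2 : ℝ) 1))
    (hω₀ : ∀ x ∈ Icc (1/2 : ℝ) 1, ω 0 x = 0)
    (hφ : IsCharacteristicFlow ω φ T)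
    (hnocross : ∀ t ∈ Icc 0 T, StrictMonoOn (φ t) (Icc 0 1))
    {t : ℝ} (ht : t ∈ Icc 0 T) : ∀ y ∈ Icc (φ t (1/2)) 1, ω t y ≤ 0 := by
  obtain ⟨δ, hδ, hmem⟩ := hφ.exists_mem_Ioo hsol.1.continuousOn
  have hsub : Ico (1/2 : ℝ) 1 ⊆ Icc 0 1 := fun x hx => ⟨by linarith [hx.1], hx.2.le⟩
  have h12 : (1/2 : ℝ) ∈ Ico (1/2) 1 := ⟨le_rfl, by norm_num⟩
  have hchar : ∀ x ∈ Ico (1/2 : ℝ) 1, ω t (φ t x) ≤ 0 := fun x hx => by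
    have hρx : ∀ s ∈ Ioo 0 T, deriv (ρ s) (φ s x) ≤ 0 := fun s hs =>
      deriv_nonpos_of_antitoneOn_Ico
        (antitoneOn_density hsol hρ₀ hφ hnocross (Ioo_subset_Icc_self hs))
        ⟨(hnocross s (Ioo_subset_Icc_self hs)).monotoneOn (hsub h12) (hsub hx) hx.1,
          (hmem x hx s (Ioo_subset_Icc_self hs)).2⟩
    refine (hsol.vorticity_le_of_deriv_density_nonpos (hφ.2 x (hsub hx))
      (fun s hs => Ioo_subset_Ioo_left hδ.le (hmem x hx s hs)) hρx ht).trans_eq ?_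
    rw [hφ.1 x (hsub hx), hω₀ x (Ico_subset_Icc_self hx)]
  refine ContinuousOn.nonpos_of_nonpos_on_Ico ((hsol.1.continuousOn.uncurry_left t ht).mono
    (Icc_subset_Icc (hδ.trans (hmem _ h12 t ht).1).le le_rfl)) (hmem _ h12 t ht).2 fun y hy => ?_
  obtain ⟨x, hx, rfl⟩ := hφ.Ico_subset_image hsol.1.continuousOn ht hy
  exact hchar x hx

end Boussinesq

theorem omega_sign_and_monotone_general (T : ℝ) (ω ρ : ℝ → ℝ → ℝ)
    (hsol : IsClassicalSolution ω ρ (Icc 0 T))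
    (hρ₀ : AntitoneOn (fun x => ρ 0 x) (Icc (1/2 : ℝ) 1))
    (hω₀ : ∀ x ∈ Icc (1/2 : ℝ) 1, ω 0 x = 0)
    (φ : ℝ → ℝ → ℝ)
    (hφ0 : ∀ x ∈ Icc (0:ℝ) 1, φ 0 x = x)
    (hφ : ∀ x ∈ Icc (0:ℝ) 1, ∀ t ∈ Icc (0:ℝ) T,
      HasDerivAt (fun s => φ s x) (uF ω t (φ t x)) t)
    (hnocross : ∀ t ∈ Icc (0:ℝ) T, StrictMonoOn (fun x => φ t x) (Icc (0:ℝ) 1)) :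
    (∀ t ∈ Icc (0:ℝ) T, ∀ x ∈ Icc (φ t (1/2)) 1, ω t x ≤ 0) ∧
    MonotoneOn (fun t => φ t (1/2)) (Icc (0:ℝ) T) := by
  have hflow : IsCharacteristicFlow ω φ T := ⟨hφ0, hφ⟩
  have hsign : ∀ t ∈ Icc 0 T, ∀ y ∈ Icc (φ t (1/2)) 1, ω t y ≤ 0 := fun t ht =>
    vorticity_nonpos hsol hρ₀ hω₀ hflow hnocross ht
  obtain ⟨δ, hδ, hmem⟩ := hflow.exists_mem_Ioo hsol.1.continuousOn
  have h12 : (1/2 : ℝ) ∈ Ico (1/2) 1 := ⟨le_rfl, by norm_num⟩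
  exact ⟨hsign, hflow.monotoneOn_of_vorticity_nonpos ⟨by norm_num, by norm_num⟩
    (fun t ht => ⟨hδ.trans (hmem _ h12 t ht).1, (hmem _ h12 t ht).2.le⟩) hsign⟩

/-- If `ρ₀` is nonincreasing on `[1/2,1]` and `ω₀ ≡ 0` on `[1/2,1]`, and the
characteristics do not cross, then `ω(t,·) ≤ 0` on `[φ_t(1/2),1]` and
`t ↦ φ_t(1/2)` is nondecreasing. -/
theorem omega_sign_and_monotone (T : ℝ) (hT : 0 ≤ T) (ω ρ : ℝ → ℝ → ℝ)
    (hsol : IsClassicalSolution ω ρ (Icc 0 T))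
    (hρ₀ : AntitoneOn (fun x => ρ 0 x) (Icc (1/2 : ℝ) 1))
    (hω₀ : ∀ x ∈ Icc (1/2 : ℝ) 1, ω 0 x = 0)
    (φ : ℝ → ℝ → ℝ)
    (hφ0 : ∀ x ∈ Icc (0:ℝ) 1, φ 0 x = x)
    (hφ : ∀ x ∈ Icc (0:ℝ) 1, ∀ t ∈ Icc (0:ℝ) T,
      HasDerivAt (fun s => φ s x) (uF ω t (φ t x)) t)
    (hnocross : ∀ t ∈ Icc (0:ℝ) T, StrictMonoOn (fun x => φ t x) (Icc (0:ℝ) 1)) :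
    (∀ t ∈ Icc (0:ℝ) T, ∀ x ∈ Icc (φ t (1/2)) 1, ω t x ≤ 0) ∧
    MonotoneOn (fun t => φ t (1/2)) (Icc (0:ℝ) T) :=
  omega_sign_and_monotone_general T ω ρ hsol hρ₀ hω₀ φ hφ0 hφ hnocross
end

section
/- For each n ≥ 1 let ψ_n : [0,5) → ℝ be twice continuously differentiable, and assume: ψ_n′(t) ≥ 0 for all n ≥ 1 and t ∈ [0,5); ψ_n(t) ≥ ψ_{n-1}(t) ≥ 0 for all n ≥ 2 and t ∈ [0,5); ψ_n″(t) ≥ 2^{-n} e^{ψ_{n-1}(t)} - 4 for all n ≥ 2 and t ∈ [0,5); and ψ_1(1) ≥ 9. Define t_n = 2 - 2^{1-n} for n ≥ 1. Then ψ_n(t_n) ≥ 3n + 6 for every n ≥ 1; in particular ψ_n(t_n) → ∞ as n → ∞. -/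
/-!
Induction on `n`, with `t_n = 2 - 2^{1-n}`. Since `ψ_n` is nondecreasing, `ψ_n ≥ 3n + 6` on
`[t_n, t_{n+1}]`, an interval of length `2^{-n}`, so there
`ψ_{n+1}'' ≥ c := 2^{-n-1} e^{3n+6} - 4`.
As `ψ_{n+1}' ≥ 0`, the second-order Taylor bound gives
`ψ_{n+1}(t_{n+1}) ≥ ψ_{n+1}(t_n) + c/2 · 2^{-2n} ≥ ψ_n(t_n) + 3`, using only `e ≥ 2`.
-/

open Filter Set

theorem quadratic_le_image_sub_of_le_deriv2 {f f' f'' : ℝ → ℝ} {a b c : ℝ} (hab : a ≤ b)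
    (hf : ∀ x ∈ Icc a b, HasDerivAt f (f' x) x)
    (hf' : ∀ x ∈ Icc a b, HasDerivAt f' (f'' x) x)
    (hc : ∀ x ∈ Icc a b, c ≤ f'' x) :
    f' a * (b - a) + c / 2 * (b - a) ^ 2 ≤ f b - f a := by
  have ha : a ∈ Icc a b := left_mem_Icc.2 hab
  have hf'_mono : MonotoneOn (fun t => f' t - c * t) (Icc a b) :=
    monotoneOn_of_hasDerivWithinAt_nonneg (convex_Icc a b)
      (fun x hx => ((hf' x hx).sub ((hasDerivAt_id x).const_mul c)).continuousAt.continuousWithinAt)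
      (fun x hx => ((hf' x (interior_subset hx)).sub
        ((hasDerivAt_id x).const_mul c)).hasDerivWithinAt)
      (fun x hx => by simpa using hc x (interior_subset hx))
  have hg : ∀ x ∈ Icc a b, HasDerivAt (fun t => f t - f' a * t - c / 2 * (t - a) ^ 2)
      (f' x - f' a - c * (x - a)) x := fun x hx =>
    (((hf x hx).sub ((hasDerivAt_id x).const_mul (f' a))).sub
      ((((hasDerivAt_id x).sub_const a).pow 2).const_mul (c / 2))).congr_deriv (by simp; ring)
  have hg_mono : MonotoneOn (fun t => f t - f' a * t - c / 2 * (t - a) ^ 2) (Icc a b) := by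
    refine monotoneOn_of_hasDerivWithinAt_nonneg (convex_Icc a b)
      (fun x hx => (hg x hx).continuousAt.continuousWithinAt)
      (fun x hx => (hg x (interior_subset hx)).hasDerivWithinAt) fun x hx => ?_
    have := hf'_mono ha (interior_subset hx) (interior_subset hx).1
    simp only at this
    linarith
  have := hg_mono ha (right_mem_Icc.2 hab) hab
  simp only [sub_self] at this
  linarith

theorem ContDiffOn.hasDerivAt_deriv_of_isOpen {f : ℝ → ℝ} {s : Set ℝ}
    (hf : ContDiffOn ℝ 2 f s) (hs : IsOpen s) {x : ℝ} (hx : x ∈ s) :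
    HasDerivAt f (deriv f x) x ∧ HasDerivAt (deriv f) (deriv (deriv f) x) x := by
  have hf' : ContDiffOn ℝ 1 (deriv f) s := hf.deriv_of_isOpen hs (by norm_num)
  exact ⟨(hf.differentiableOn (by norm_num) x hx).differentiableAt (hs.mem_nhds hx) |>.hasDerivAt,
    (hf'.differentiableOn one_ne_zero x hx).differentiableAt (hs.mem_nhds hx) |>.hasDerivAt⟩

noncomputable def blowupTime (n : ℕ) : ℝ := 2 - 2 ^ (1 - (n : ℤ))

lemma blowupTime_one : blowupTime 1 = 1 := by norm_num [blowupTime]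

lemma blowupTime_eq_two_sub_div (n : ℕ) : blowupTime n = 2 - 2 / 2 ^ n := by
  rw [blowupTime, zpow_sub₀ two_ne_zero, zpow_one, zpow_natCast]

lemma blowupTime_succ (n : ℕ) : blowupTime (n + 1) = blowupTime n + (2 ^ n)⁻¹ := by
  rw [blowupTime_eq_two_sub_div, blowupTime_eq_two_sub_div, pow_succ]
  field_simp
  ring

lemma blowupTime_le_succ (n : ℕ) : blowupTime n ≤ blowupTime (n + 1) := by
  rw [blowupTime_succ]
  exact le_add_of_nonneg_right (by positivity)

lemma blowupTime_mem_Icc {n : ℕ} (hn : 1 ≤ n) : blowupTime n ∈ Icc 1 2 := by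
  have h2n : (2 : ℝ) ≤ 2 ^ n := by simpa using pow_le_pow_right₀ one_le_two hn
  have hdiv : (0 : ℝ) ≤ 2 / 2 ^ n := by positivity
  rw [blowupTime_eq_two_sub_div]
  constructor
  · rw [le_sub_comm, div_le_iff₀ (by positivity)]
    linarith
  · linarith

lemma Icc_blowupTime_subset {n : ℕ} (hn : 1 ≤ n) :
    Icc (blowupTime n) (blowupTime (n + 1)) ⊆ Ioo 0 5 := fun _ hx =>
  ⟨by linarith [hx.1, (blowupTime_mem_Icc hn).1],
    by linarith [hx.2, (blowupTime_mem_Icc (Nat.le_add_left 1 n)).2]⟩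

lemma three_le_exp_gain (n : ℕ) :
    3 ≤ ((2 ^ (n + 1))⁻¹ * Real.exp (3 * n + 6) - 4) / 2 * ((2 ^ n)⁻¹) ^ 2 := by
  set q : ℝ := 2 ^ n with hq
  have hq1 : 1 ≤ q := one_le_pow₀ one_le_two
  have hexp : 64 * q ^ 3 ≤ Real.exp (3 * n + 6) :=
    calc 64 * q ^ 3 = 2 ^ (3 * n + 6) := by rw [hq]; ring
      _ ≤ Real.exp 1 ^ (3 * n + 6) := by gcongr; linarith [Real.add_one_le_exp 1]
      _ = Real.exp (3 * n + 6) := by rw [← Real.exp_nat_mul]; push_cast; ring_nf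
  have hc : 32 * q ^ 2 - 4 ≤ (q * 2)⁻¹ * Real.exp (3 * n + 6) - 4 := by
    rw [inv_mul_eq_div, sub_le_sub_iff_right, le_div_iff₀ (by positivity)]
    nlinarith
  rw [pow_succ, ← hq]
  calc (3 : ℝ) ≤ (32 * q ^ 2 - 4) / 2 * (q⁻¹) ^ 2 := by field_simp; nlinarith
    _ ≤ _ := by gcongr

theorem add_three_le_of_exp_le_deriv2 {f g g' g'' : ℝ → ℝ} {n : ℕ} {a b : ℝ}
    (hb : b = a + (2 ^ n)⁻¹)
    (hg : ∀ x ∈ Icc a b, HasDerivAt g (g' x) x)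
    (hg' : ∀ x ∈ Icc a b, HasDerivAt g' (g'' x) x)
    (hg'a : 0 ≤ g' a) (hf : ∀ x ∈ Icc a b, 3 * n + 6 ≤ f x)
    (hfg : ∀ x ∈ Icc a b, (2 ^ (n + 1))⁻¹ * Real.exp (f x) - 4 ≤ g'' x) :
    g a + 3 ≤ g b := by
  have hba : b - a = (2 ^ n)⁻¹ := by rw [hb]; ring
  have hab : a ≤ b := by rw [← sub_nonneg, hba]; positivity
  have hc : ∀ x ∈ Icc a b, (2 ^ (n + 1))⁻¹ * Real.exp (3 * n + 6) - 4 ≤ g'' x :=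
    fun x hx => le_trans (by gcongr; exact hf x hx) (hfg x hx)
  have htaylor := quadratic_le_image_sub_of_le_deriv2 hab hg hg' hc
  rw [hba] at htaylor
  nlinarith [three_le_exp_gain n, mul_nonneg hg'a (inv_nonneg.2 (pow_nonneg zero_le_two n))]

/-- **The key ODE-system lemma behind blow up.** Suppose for each `n ≥ 1`,
`ψ_n : [0,5) → ℝ` is `C²` with `ψ_n' ≥ 0` on `[0,5)`, `ψ_n ≥ ψ_{n-1} ≥ 0` for
`n ≥ 2`, `ψ_n'' ≥ 2^{-n} e^{ψ_{n-1}} - 4` for `n ≥ 2` on `[0,5)`, and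
`ψ_1(1) ≥ 9`. With `t_n = 2 - 2^{1-n}`, one has `ψ_n(t_n) ≥ 3n + 6` for all
`n ≥ 1`; in particular `ψ_n(t_n) → ∞`. -/
theorem psi_blowup (ψ : ℕ → ℝ → ℝ)
    (hC2 : ∀ n : ℕ, 1 ≤ n → ContDiffOn ℝ 2 (ψ n) (Ico (0:ℝ) 5))
    (hd1 : ∀ n : ℕ, 1 ≤ n → ∀ t ∈ Ico (0:ℝ) 5, 0 ≤ deriv (ψ n) t)
    (hmono : ∀ n : ℕ, 2 ≤ n → ∀ t ∈ Ico (0:ℝ) 5,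
      ψ (n - 1) t ≤ ψ n t ∧ 0 ≤ ψ (n - 1) t)
    (hd2 : ∀ n : ℕ, 2 ≤ n → ∀ t ∈ Ico (0:ℝ) 5,
      (2:ℝ) ^ (-(n:ℤ)) * Real.exp (ψ (n - 1) t) - 4 ≤ deriv (deriv (ψ n)) t)
    (h1 : 9 ≤ ψ 1 1) :
    (∀ n : ℕ, 1 ≤ n → 3 * (n : ℝ) + 6 ≤ ψ n (2 - (2:ℝ) ^ (1 - (n:ℤ)))) ∧
    Tendsto (fun n : ℕ => ψ n (2 - (2:ℝ) ^ (1 - (n:ℤ)))) atTop atTop := by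
  have hderiv (n : ℕ) (hn : 1 ≤ n) (x : ℝ) (hx : x ∈ Ioo 0 5) :=
    ((hC2 n hn).mono Ioo_subset_Ico_self).hasDerivAt_deriv_of_isOpen isOpen_Ioo hx
  have hmon (n : ℕ) (hn : 1 ≤ n) : MonotoneOn (ψ n) (Ico 0 5) :=
    monotoneOn_of_deriv_nonneg (convex_Ico 0 5) (hC2 n hn).continuousOn
      (by
        rw [interior_Ico]
        exact fun x hx => (hderiv n hn x hx).1.differentiableAt.differentiableWithinAt)
      (by rw [interior_Ico]; exact fun x hx => hd1 n hn x (Ioo_subset_Ico_self hx))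
  have key (n : ℕ) (hn : 1 ≤ n) : 3 * (n : ℝ) + 6 ≤ ψ n (blowupTime n) := by
    induction n, hn using Nat.le_induction with
    | base => norm_num [blowupTime_one]; linarith
    | succ n hn ih =>
      have hI : Icc (blowupTime n) (blowupTime (n + 1)) ⊆ Ico 0 5 :=
        (Icc_blowupTime_subset hn).trans Ioo_subset_Ico_self
      have ha := left_mem_Icc.2 (blowupTime_le_succ n)
      have hψ' := fun x hx => hderiv (n + 1) (by omega) x (Icc_blowupTime_subset hn hx)
      have hstep := add_three_le_of_exp_le_deriv2 (f := ψ n) (blowupTime_succ n)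
        (fun x hx => (hψ' x hx).1) (fun x hx => (hψ' x hx).2) (hd1 (n + 1) (by omega) _ (hI ha))
        (fun x hx => ih.trans (hmon n hn (hI ha) (hI hx) hx.1))
        (fun x hx => by
          simpa only [add_tsub_cancel_right, zpow_neg, zpow_natCast] using
            hd2 (n + 1) (by omega) x (hI hx))
      have hprev := (hmono (n + 1) (by omega) _ (hI ha)).1
      simp only [add_tsub_cancel_right] at hprev
      push_cast
      linarith
  refine ⟨key, tendsto_atTop_mono' atTop (eventually_atTop.2 ⟨1, key⟩) ?_⟩
  exact tendsto_atTop_add_const_right _ _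
    ((tendsto_natCast_atTop_atTop (R := ℝ)).const_mul_atTop three_pos)
end

section
/- Let C > 0 and f₀ ≥ 1. Let f_0 : [0,T] → ℝ be the constant function f₀, and for each n ≥ 1 let f_n : [0,T] → ℝ be differentiable with f_n(0) = f₀, f_n(t) ≥ 1 for all t, and f_n′(t) ≤ C · √(f_{n-1}(t)) · f_n(t) for all t ∈ [0,T]. Then for every n ≥ 1 and every t ∈ [0,T] with t < 1/(C √f₀), one has f_n(t) ≤ 1/( f₀^{-1/2} - C t )². -/
/-!
Put `a = 1/√f₀`. By induction on `n`, `f_n(t) ≤ (a - C t)⁻²`: the case `n = 0` is `f₀ = a⁻²`, and if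
`√f_{n-1} ≤ (a - C t)⁻¹` then `f_n' ≤ C f_n / (a - C t)`, so `f_n(t) (a - C t)` is nonincreasing.
Hence `f_n(t) (a - C t) ≤ f₀ a = a⁻¹ ≤ (a - C t)⁻¹`, which is the bound at level `n`.
-/

open Set

lemma mul_sub_le_of_deriv_mul_le {g : ℝ → ℝ} {a C x y : ℝ} (hxy : x ≤ y)
    (hg : ∀ s ∈ Icc x y, DifferentiableAt ℝ g s)
    (hder : ∀ s ∈ Ioo x y, deriv g s * (a - C * s) ≤ C * g s) :
    g y * (a - C * y) ≤ g x * (a - C * x) := by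
  have hφ : ∀ s ∈ Icc x y, HasDerivAt (fun s ↦ g s * (a - C * s))
      (deriv g s * (a - C * s) + g s * -(C * 1)) s := fun s hs ↦
    (hg s hs).hasDerivAt.mul (((hasDerivAt_id s).const_mul C).const_sub a)
  have hanti : AntitoneOn (fun s ↦ g s * (a - C * s)) (Icc x y) := by
    apply antitoneOn_of_deriv_nonpos (convex_Icc x y)
    · exact fun s hs ↦ (hφ s hs).continuousAt.continuousWithinAt
    · rw [interior_Icc]
      exact fun s hs ↦ (hφ s (Ioo_subset_Icc_self hs)).differentiableAt.differentiableWithinAt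
    · rw [interior_Icc]
      intro s hs
      rw [(hφ s (Ioo_subset_Icc_self hs)).deriv]
      linarith [hder s hs]
  exact hanti (left_mem_Icc.mpr hxy) (right_mem_Icc.mpr hxy) hxy

lemma le_inv_sub_sq_of_deriv_le {g : ℝ → ℝ} {a C t : ℝ} (hC : 0 ≤ C) (ht : 0 ≤ t)
    (hCt : C * t < a) (hg : ∀ s ∈ Icc 0 t, DifferentiableAt ℝ g s)
    (hder : ∀ s ∈ Ioo 0 t, deriv g s ≤ C * (a - C * s)⁻¹ * g s) (hg0 : g 0 ≤ (a⁻¹) ^ 2) :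
    g t ≤ ((a - C * t)⁻¹) ^ 2 := by
  have hpos : 0 < a - C * t := sub_pos.mpr hCt
  have ha : 0 < a := hpos.trans_le (sub_le_self a (mul_nonneg hC ht))
  have hmono := mul_sub_le_of_deriv_mul_le ht hg fun s hs ↦ by
    have hs_pos : 0 < a - C * s := by nlinarith [hs.2]
    calc deriv g s * (a - C * s) ≤ C * (a - C * s)⁻¹ * g s * (a - C * s) :=
          mul_le_mul_of_nonneg_right (hder s hs) hs_pos.le
      _ = C * g s := by field_simp
  have hfinal : g t * (a - C * t) ≤ a⁻¹ := by
    calc g t * (a - C * t) ≤ g 0 * (a - C * 0) := hmono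
      _ ≤ a⁻¹ ^ 2 * a := by rw [mul_zero, sub_zero]; gcongr
      _ = a⁻¹ := by field_simp
  calc g t = g t * (a - C * t) * (a - C * t)⁻¹ := by field_simp
    _ ≤ a⁻¹ * (a - C * t)⁻¹ := by gcongr
    _ ≤ (a - C * t)⁻¹ * (a - C * t)⁻¹ := by
        gcongr; exact sub_le_self a (mul_nonneg hC ht)
    _ = ((a - C * t)⁻¹) ^ 2 := (sq _).symm

lemma le_inv_sub_sq_of_deriv_le_mul_sqrt {g h : ℝ → ℝ} {a C T : ℝ} (hC : 0 ≤ C)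
    (hg : ∀ s ∈ Icc 0 T, C * s < a → g s ≤ ((a - C * s)⁻¹) ^ 2)
    (hh_nonneg : ∀ s ∈ Icc 0 T, 0 ≤ h s)
    (hh : ∀ s ∈ Icc 0 T, DifferentiableAt ℝ h s ∧ deriv h s ≤ C * Real.sqrt (g s) * h s)
    (hh0 : h 0 ≤ (a⁻¹) ^ 2) :
    ∀ t ∈ Icc 0 T, C * t < a → h t ≤ ((a - C * t)⁻¹) ^ 2 := by
  intro t ht hCt
  have hsub : Icc 0 t ⊆ Icc 0 T := Icc_subset_Icc_right ht.2
  refine le_inv_sub_sq_of_deriv_le hC ht.1 hCt (fun s hs ↦ (hh s (hsub hs)).1)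
    (fun s hs ↦ ?_) hh0
  have hsT := hsub (Ioo_subset_Icc_self hs)
  have hCs : C * s < a := by nlinarith [hs.2]
  have hsqrt : Real.sqrt (g s) ≤ (a - C * s)⁻¹ := by
    simpa only [Real.sqrt_sq (inv_nonneg.mpr (sub_pos.mpr hCs).le)] using
      Real.sqrt_le_sqrt (hg s hsT hCs)
  calc deriv h s ≤ C * Real.sqrt (g s) * h s := (hh s hsT).2
    _ ≤ C * (a - C * s)⁻¹ * h s := by
        have := hh_nonneg s hsT
        gcongr

/-- **Uniform bound for the iteration scheme.** If `f_0 ≡ f₀ ≥ 1` and for each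
`n ≥ 1`, `f_n` is differentiable on `[0,T]` with `f_n(0) = f₀`, `f_n ≥ 1`, and
`f_n' ≤ C √(f_{n-1}) f_n`, then `f_n(t) ≤ 1/(f₀^{-1/2} - C t)²` for every
`t ∈ [0,T]` with `t < 1/(C √f₀)`. -/
theorem iteration_uniform_bound (C f₀ T : ℝ) (hC : 0 < C) (hf₀ : 1 ≤ f₀)
    (f : ℕ → ℝ → ℝ)
    (h0 : ∀ t ∈ Icc (0:ℝ) T, f 0 t = f₀)
    (hinit : ∀ n : ℕ, 1 ≤ n → f n 0 = f₀)
    (hge1 : ∀ n : ℕ, 1 ≤ n → ∀ t ∈ Icc (0:ℝ) T, 1 ≤ f n t)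
    (hdiff : ∀ n : ℕ, 1 ≤ n → ∀ t ∈ Icc (0:ℝ) T,
      DifferentiableAt ℝ (f n) t ∧
      deriv (f n) t ≤ C * Real.sqrt (f (n - 1) t) * f n t) :
    ∀ n : ℕ, 1 ≤ n → ∀ t ∈ Icc (0:ℝ) T, t < 1 / (C * Real.sqrt f₀) →
      f n t ≤ 1 / ((Real.sqrt f₀)⁻¹ - C * t) ^ 2 := by
  set a := (Real.sqrt f₀)⁻¹
  have hf₀_eq : f₀ = (a⁻¹) ^ 2 := by rw [inv_inv, Real.sq_sqrt (by linarith)]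
  have hbound : ∀ n, ∀ t ∈ Icc (0:ℝ) T, C * t < a → f n t ≤ ((a - C * t)⁻¹) ^ 2 := by
    intro n
    induction n with
    | zero =>
      intro t ht hCt
      rw [h0 t ht, hf₀_eq]
      have hpos : 0 < a - C * t := sub_pos.mpr hCt
      gcongr
      exact sub_le_self a (mul_nonneg hC.le ht.1)
    | succ n ih =>
      have hn : 1 ≤ n + 1 := Nat.le_add_left 1 n
      exact le_inv_sub_sq_of_deriv_le_mul_sqrt hC.le ih
        (fun s hs ↦ zero_le_one.trans (hge1 _ hn s hs)) (hdiff _ hn) (hinit _ hn ▸ hf₀_eq.le)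
  intro n _ t ht htC
  have hCt : C * t < a := by
    rwa [one_div, mul_inv, ← div_eq_inv_mul, lt_div_iff₀' hC] at htC
  simpa [one_div, inv_pow] using hbound n t ht hCt
end
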